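/- With R̄ and X as above (X unit, JX ⊥ 𝔍X), any vector Y orthogonal to X, JX, J₁X, J₂X, J₃X, J₁JX, J₂JX, J₃JX satisfies R̄_X(Y) = -(1/2)Y; i.e., the orthogonal complement of ℝX ⊕ ℝJX ⊕ 𝔍X ⊕ 𝔍JX is contained in the eigenspace of the Jacobi operator with eigenvalue -1/2. -/
import Mathlib


open scoped RealInnerProductSpace

/-- For the curvature tensor of SU(2,m)/S(U₂U_m) and a unit vector X with JX ⊥ 𝔍X,
any Y orthogonal to X, JX, J_νX, J_νJX satisfies R̄_X(Y) = -(1/2)Y. -/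
theorem jacobi_operator_eigenvalue_neg_half
    {V : Type*} [NormedAddCommGroup V] [InnerProductSpace ℝ V]
    (J : V →ₗ[ℝ] V)
    (hJ2 : ∀ x, J (J x) = -x) (hJg : ∀ x y, ⟪J x, J y⟫ = ⟪x, y⟫)
    (Jq : Fin 3 → (V →ₗ[ℝ] V))
    (hJq2 : ∀ ν x, Jq ν (Jq ν x) = -x)
    (hJqg : ∀ ν x y, ⟪Jq ν x, Jq ν y⟫ = ⟪x, y⟫)
    (hquat : ∀ ν x, Jq ν (Jq (ν + 1) x) = Jq (ν + 2) x ∧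
      Jq (ν + 2) x = -(Jq (ν + 1) (Jq ν x)))
    (hcomm : ∀ ν x, J (Jq ν x) = Jq ν (J x))
    (X : V) (hX : ‖X‖ = 1)
    (hperp : ∀ ν : Fin 3, ⟪J X, Jq ν X⟫ = 0)
    (Y : V) (hY1 : ⟪Y, X⟫ = 0) (hY2 : ⟪Y, J X⟫ = 0)
    (hY3 : ∀ ν : Fin 3, ⟪Y, Jq ν X⟫ = 0) (hY4 : ∀ ν : Fin 3, ⟪Y, Jq ν (J X)⟫ = 0) :
    let Rb : V → V → V → V := fun X Y Z =>
      (-(1 / 2 : ℝ)) • (⟪Y, Z⟫ • X - ⟪X, Z⟫ • Y + ⟪J Y, Z⟫ • J X - ⟪J X, Z⟫ • J Y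
        - (2 * ⟪J X, Y⟫) • J Z
        + ∑ ν : Fin 3, (⟪Jq ν Y, Z⟫ • Jq ν X - ⟪Jq ν X, Z⟫ • Jq ν Y
            - (2 * ⟪Jq ν X, Y⟫) • Jq ν Z)
        + ∑ ν : Fin 3, (⟪Jq ν (J Y), Z⟫ • Jq ν (J X) - ⟪Jq ν (J X), Z⟫ • Jq ν (J Y)))
    Rb Y X X = (-(1 / 2 : ℝ)) • Y := by
  have skew : ∀ (A : V →ₗ[ℝ] V), (∀ x, A (A x) = -x) →
      (∀ x y, ⟪A x, A y⟫ = ⟪x, y⟫) → ∀ x y, ⟪A x, y⟫ = -⟪x, A y⟫ := by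
    intro A h2 hg x y
    have h := hg x (A y)
    rw [h2, inner_neg_right] at h
    linarith
  intro Rb
  have hXX : ⟪X, X⟫ = (1 : ℝ) := by
    rw [real_inner_self_eq_norm_mul_norm, hX]; ring
  have hXY : ⟪X, X⟫ • Y = Y := by rw [hXX, one_smul]
  have h1 : ⟪Y, X⟫ = 0 := hY1
  have h2 : ⟪J X, X⟫ = 0 := by
    have := skew J hJ2 hJg X X
    have hs := real_inner_comm X (J X)
    linarith
  have h3 : ⟪J Y, X⟫ = 0 := by
    rw [skew J hJ2 hJg Y X]; rw [hY2]; ring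
  have h4 : ∀ ν, ⟪Jq ν X, X⟫ = 0 := by
    intro ν
    have := skew (Jq ν) (hJq2 ν) (hJqg ν) X X
    have hs := real_inner_comm X (Jq ν X)
    linarith
  have h5 : ∀ ν, ⟪Jq ν Y, X⟫ = 0 := by
    intro ν
    rw [skew (Jq ν) (hJq2 ν) (hJqg ν) Y X, hY3 ν]; ring
  have h6 : ∀ ν, ⟪Jq ν (J X), X⟫ = 0 := by
    intro ν
    rw [skew (Jq ν) (hJq2 ν) (hJqg ν) (J X) X, hperp ν]; ring
  have h7 : ∀ ν, ⟪Jq ν (J Y), X⟫ = 0 := by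
    intro ν
    calc ⟪Jq ν (J Y), X⟫ = -⟪J Y, Jq ν X⟫ := skew (Jq ν) (hJq2 ν) (hJqg ν) _ _
      _ = -(-⟪Y, J (Jq ν X)⟫) := by rw [skew J hJ2 hJg]
      _ = ⟪Y, Jq ν (J X)⟫ := by rw [hcomm, neg_neg]
      _ = 0 := hY4 ν
  simp only [Rb, h1, h2, h3, hXX, h4, h5, h6, h7, zero_smul, mul_zero, one_smul,
    sub_zero, zero_sub, add_zero, neg_zero, Finset.sum_const_zero]
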